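/- For any policy π and two MDPs M_i and M_j sharing the same state space S, action space A, and discount factor γ ∈ [0,1), if the reward functions satisfy max_s |R_i(s) − R_j(s)| ≤ ε_R and the transition kernels satisfy max_{s,a} ‖P_i(s,a) − P_j(s,a)‖₁ ≤ ε_P, and rewards are bounded by R_max, then the value functions of π in the two MDPs satisfy ‖V_{M_i}^π − V_{M_j}^π‖_∞ ≤ ε_R/(1−γ) + γ ε_P R_max / (1−γ)². -/

import Mathlib

open Finset

/-! Fix `π` and write `Kᵢ s s' = Pᵢ s (π s) s'`. Subtracting the two Bellman equations gives
`Vᵢ - Vⱼ = (Rᵢ - Rⱼ) + γ Kᵢ (Vᵢ - Vⱼ) + γ (Kᵢ - Kⱼ) Vⱼ`. Since `Kᵢ` averages, the middle term has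
sup norm at most `γ ‖Vᵢ - Vⱼ‖`, and the last at most `γ εP ‖Vⱼ‖`; hence
`‖Vᵢ - Vⱼ‖ ≤ (εR + γ εP ‖Vⱼ‖) / (1 - γ)`. The same absorption argument applied to the Bellman
equation of `Vⱼ` alone gives `‖Vⱼ‖ ≤ Rmax / (1 - γ)`. -/

section

variable {S : Type*} [Fintype S]

lemma abs_sum_mul_le_sum_abs_mul_norm (q f : S → ℝ) :
    |∑ s, q s * f s| ≤ (∑ s, |q s|) * ‖f‖ := by
  rw [sum_mul]
  refine (abs_sum_le_sum_abs _ _).trans (sum_le_sum fun s _ => ?_)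
  rw [abs_mul, ← Real.norm_eq_abs (f s)]
  exact mul_le_mul_of_nonneg_left (norm_le_pi_norm f s) (abs_nonneg _)

lemma abs_sum_mul_le_norm_of_stochastic {q : S → ℝ} (hq0 : ∀ s, 0 ≤ q s) (hq1 : ∑ s, q s = 1)
    (f : S → ℝ) : |∑ s, q s * f s| ≤ ‖f‖ := by
  simpa [abs_of_nonneg (hq0 _), hq1] using abs_sum_mul_le_sum_abs_mul_norm q f

lemma norm_le_div_one_sub_of_abs_le [Nonempty S] {x : S → ℝ} {a γ : ℝ} (hγ1 : γ < 1)
    (h : ∀ s, |x s| ≤ a + γ * ‖x‖) : ‖x‖ ≤ a / (1 - γ) := by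
  have hx : ‖x‖ ≤ a + γ * ‖x‖ := (pi_norm_le_iff_of_nonempty x).2 h
  rw [le_div_iff₀ (by linarith)]
  linarith

variable (K L : S → S → ℝ) (R Q V W : S → ℝ) (γ : ℝ)

lemma norm_le_of_bellman [Nonempty S] (hγ0 : 0 ≤ γ) (hγ1 : γ < 1)
    (hK : ∀ s, (∀ s', 0 ≤ K s s') ∧ ∑ s', K s s' = 1)
    {Rmax : ℝ} (hR : ∀ s, |R s| ≤ Rmax) (hV : ∀ s, V s = R s + γ * ∑ s', K s s' * V s') :
    ‖V‖ ≤ Rmax / (1 - γ) := by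
  refine norm_le_div_one_sub_of_abs_le hγ1 fun s => ?_
  calc |V s| ≤ |R s| + |γ * ∑ s', K s s' * V s'| := by
        rw [hV s]
        exact abs_add_le _ _
    _ ≤ Rmax + γ * ‖V‖ := by
        rw [abs_mul, abs_of_nonneg hγ0]
        gcongr
        · exact hR s
        · exact abs_sum_mul_le_norm_of_stochastic (hK s).1 (hK s).2 V

lemma bellman_sub_eq (hV : ∀ s, V s = R s + γ * ∑ s', K s s' * V s')
    (hW : ∀ s, W s = Q s + γ * ∑ s', L s s' * W s') (s : S) :
    V s - W s = (R s - Q s) + γ * ∑ s', K s s' * (V - W) s'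
      + γ * ∑ s', (K s s' - L s s') * W s' := by
  rw [hV s, hW s]
  simp only [Pi.sub_apply, mul_sub, sub_mul, sum_sub_distrib]
  ring

lemma norm_sub_le_of_bellman [Nonempty S] (hγ0 : 0 ≤ γ) (hγ1 : γ < 1)
    (hK : ∀ s, (∀ s', 0 ≤ K s s') ∧ ∑ s', K s s' = 1)
    {εR εP M : ℝ} (hεR : ∀ s, |R s - Q s| ≤ εR) (hεP : ∀ s, ∑ s', |K s s' - L s s'| ≤ εP)
    (hWM : ‖W‖ ≤ M) (hV : ∀ s, V s = R s + γ * ∑ s', K s s' * V s')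
    (hW : ∀ s, W s = Q s + γ * ∑ s', L s s' * W s') :
    ‖V - W‖ ≤ (εR + γ * (εP * M)) / (1 - γ) := by
  refine norm_le_div_one_sub_of_abs_le hγ1 fun s => ?_
  have hεP0 : 0 ≤ εP := (sum_nonneg fun _ _ => abs_nonneg _).trans (hεP s)
  have hperturb : |∑ s', (K s s' - L s s') * W s'| ≤ εP * M :=
    (abs_sum_mul_le_sum_abs_mul_norm _ W).trans (mul_le_mul (hεP s) hWM (norm_nonneg W) hεP0)
  have hcontract := abs_sum_mul_le_norm_of_stochastic (hK s).1 (hK s).2 (V - W)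
  rw [Pi.sub_apply, bellman_sub_eq K L R Q V W γ hV hW s]
  calc _ ≤ |R s - Q s| + |γ * ∑ s', K s s' * (V - W) s'|
          + |γ * ∑ s', (K s s' - L s s') * W s'| := abs_add_three _ _ _
    _ ≤ εR + γ * ‖V - W‖ + γ * (εP * M) := by
        rw [abs_mul, abs_mul, abs_of_nonneg hγ0]
        gcongr
        exact hεR s
    _ = εR + γ * (εP * M) + γ * ‖V - W‖ := by ring

end

theorem value_difference_bound_general
    {S A : Type*} [Fintype S] [Nonempty S]
    (Pi Pj : S → A → S → ℝ) (Ri Rj : S → ℝ) (γ : ℝ)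
    (hγ0 : 0 ≤ γ) (hγ1 : γ < 1)
    (hPi : ∀ s a, (∀ s', 0 ≤ Pi s a s') ∧ ∑ s', Pi s a s' = 1)
    (hPj : ∀ s a, (∀ s', 0 ≤ Pj s a s') ∧ ∑ s', Pj s a s' = 1)
    (Rmax : ℝ) (hRj : ∀ s, |Rj s| ≤ Rmax)
    (εR εP : ℝ)
    (hεR : ∀ s, |Ri s - Rj s| ≤ εR)
    (hεP : ∀ s a, ∑ s', |Pi s a s' - Pj s a s'| ≤ εP)
    (π : S → A) (Vi Vj : S → ℝ)
    (hVi : ∀ s, Vi s = Ri s + γ * ∑ s', Pi s (π s) s' * Vi s')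
    (hVj : ∀ s, Vj s = Rj s + γ * ∑ s', Pj s (π s) s' * Vj s') :
    ∀ s, |Vi s - Vj s| ≤ εR / (1 - γ) + γ * εP * Rmax / (1 - γ) ^ 2 := by
  intro s
  have hVj_le := norm_le_of_bellman _ _ _ _ hγ0 hγ1 (fun s => hPj s (π s)) hRj hVj
  have hdiff := norm_sub_le_of_bellman _ _ _ _ _ _ _ hγ0 hγ1 (fun s => hPi s (π s)) hεR
    (fun s => hεP s (π s)) hVj_le hVi hVj
  have h1γ : (1 - γ) ≠ 0 := by linarith
  calc |Vi s - Vj s| ≤ ‖Vi - Vj‖ := norm_le_pi_norm (Vi - Vj) s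
    _ ≤ _ := hdiff
    _ = _ := by field_simp

/-- Simulation lemma. For any policy `π` and two finite MDPs sharing
state/action spaces and discount `γ ∈ [0,1)`, if rewards differ by at most `εR`
pointwise and transition kernels differ by at most `εP` in `L¹` distance, and
rewards are bounded by `Rmax`, then the value functions of `π` (characterized by
their Bellman equations) differ by at most `εR/(1-γ) + γ εP Rmax/(1-γ)²`. -/
theorem value_difference_bound
    {S A : Type*} [Fintype S] [Nonempty S]
    (Pi Pj : S → A → S → ℝ) (Ri Rj : S → ℝ) (γ : ℝ)
    (hγ0 : 0 ≤ γ) (hγ1 : γ < 1)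
    (hPi : ∀ s a, (∀ s', 0 ≤ Pi s a s') ∧ ∑ s', Pi s a s' = 1)
    (hPj : ∀ s a, (∀ s', 0 ≤ Pj s a s') ∧ ∑ s', Pj s a s' = 1)
    (Rmax : ℝ) (hRi : ∀ s, |Ri s| ≤ Rmax) (hRj : ∀ s, |Rj s| ≤ Rmax)
    (εR εP : ℝ)
    (hεR : ∀ s, |Ri s - Rj s| ≤ εR)
    (hεP : ∀ s a, ∑ s', |Pi s a s' - Pj s a s'| ≤ εP)
    (π : S → A) (Vi Vj : S → ℝ)
    (hVi : ∀ s, Vi s = Ri s + γ * ∑ s', Pi s (π s) s' * Vi s')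
    (hVj : ∀ s, Vj s = Rj s + γ * ∑ s', Pj s (π s) s' * Vj s') :
    ∀ s, |Vi s - Vj s| ≤ εR / (1 - γ) + γ * εP * Rmax / (1 - γ) ^ 2 :=
  value_difference_bound_general Pi Pj Ri Rj γ hγ0 hγ1 hPi hPj Rmax hRj εR εP hεR hεP π Vi Vj hVi
    hVj
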